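/- For every integer n ≥ 2: inspc(K_n) = ⌈n/2⌉, inspc(S*_n) = ⌈n/2⌉, inspp(S̃_n) = n + 1, inpc(K_{1,n}) = ⌈n/2⌉, and insc(P_n) = ⌈n/3⌉. -/

import Mathlib

open SimpleGraph

/-- `G` contains an induced subgraph isomorphic to `H`. -/
def HasInducedCopy {V W : Type*} (G : SimpleGraph V) (H : SimpleGraph W) : Prop :=
  ∃ f : W ↪ V, ∀ a b : W, G.Adj (f a) (f b) ↔ H.Adj a b

/-- The star `K_{1,m}` (one center plus `m` leaves). -/
def starGraphK1 (m : ℕ) : SimpleGraph (Unit ⊕ Fin m) := completeBipartiteGraph Unit (Fin m)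

/-- `S` induces in `G` a subgraph isomorphic to a path `P_m` on `m ≥ 1` vertices. -/
def IsInducedPathSet {V : Type*} (G : SimpleGraph V) (S : Set V) : Prop :=
  ∃ m : ℕ, 1 ≤ m ∧ Nonempty ((G.induce S) ≃g pathGraph m)

/-- `S` induces in `G` a subgraph isomorphic to a star `K_{1,m}` with `m ≥ 1`. -/
def IsInducedStarSet {V : Type*} (G : SimpleGraph V) (S : Set V) : Prop :=
  ∃ m : ℕ, 1 ≤ m ∧ Nonempty ((G.induce S) ≃g starGraphK1 m)

/-- `S` consists of a single vertex (i.e. induces `K_1`). -/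
def IsSingletonSet {V : Type*} (S : Set V) : Prop := ∃ v, S = {v}

/-- `S` is the vertex set of an isometric (shortest) path of `G`. -/
def IsIsometricPathSet {V : Type*} (G : SimpleGraph V) (S : Set V) : Prop :=
  ∃ (u v : V) (p : G.Walk u v), p.IsPath ∧ p.length = G.dist u v ∧
    S = {x | x ∈ p.support}

/-- `P` is a family of sets, all satisfying `pred`, whose union is all of `V`. -/
def IsCoverBy {V : Type*} (P : Finset (Set V)) (pred : Set V → Prop) : Prop :=
  (∀ S ∈ P, pred S) ∧ ∀ v : V, ∃ S ∈ P, v ∈ S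

/-- `P` is a cover by sets satisfying `pred`, whose members are pairwise disjoint. -/
def IsPartitionBy {V : Type*} (P : Finset (Set V)) (pred : Set V → Prop) : Prop :=
  IsCoverBy P pred ∧ ∀ S ∈ P, ∀ T ∈ P, S ≠ T → ∀ v, v ∈ S → v ∉ T

/-- Minimum cardinality of a cover by sets satisfying `pred`. -/
noncomputable def coverNumber {V : Type*} (pred : Set V → Prop) : ℕ :=
  sInf {k | ∃ P : Finset (Set V), P.card = k ∧ IsCoverBy P pred}

/-- Minimum cardinality of a partition into sets satisfying `pred`. -/
noncomputable def partitionNumber {V : Type*} (pred : Set V → Prop) : ℕ :=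
  sInf {k | ∃ P : Finset (Set V), P.card = k ∧ IsPartitionBy P pred}

/-- The induced SP-cover number. -/
noncomputable def inspc {V : Type*} (G : SimpleGraph V) : ℕ :=
  coverNumber (fun S => IsInducedStarSet G S ∨ IsInducedPathSet G S)

/-- The induced SP-partition number. -/
noncomputable def inspp {V : Type*} (G : SimpleGraph V) : ℕ :=
  partitionNumber (fun S => IsInducedStarSet G S ∨ IsInducedPathSet G S)

/-- The induced star cover number. -/
noncomputable def insc {V : Type*} (G : SimpleGraph V) : ℕ :=
  coverNumber (fun S => IsInducedStarSet G S ∨ IsSingletonSet S)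

/-- The induced star partition number. -/
noncomputable def insp {V : Type*} (G : SimpleGraph V) : ℕ :=
  partitionNumber (fun S => IsInducedStarSet G S ∨ IsSingletonSet S)

/-- The induced path cover number. -/
noncomputable def inpc {V : Type*} (G : SimpleGraph V) : ℕ :=
  coverNumber (fun S => IsInducedPathSet G S)

/-- The induced path partition number. -/
noncomputable def inpp {V : Type*} (G : SimpleGraph V) : ℕ :=
  partitionNumber (fun S => IsInducedPathSet G S)

/-- The isometric path cover number. -/
noncomputable def ispc {V : Type*} (G : SimpleGraph V) : ℕ :=
  coverNumber (fun S => IsIsometricPathSet G S)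

/-- The isometric path partition number. -/
noncomputable def ispp {V : Type*} (G : SimpleGraph V) : ℕ :=
  partitionNumber (fun S => IsIsometricPathSet G S)

/-- `S*_n` : center `x = inl ()`, middle vertices `y i = inr (inl i)`,
leaves `z i = inr (inr i)`; edges `x yᵢ` and `yᵢ zᵢ`. -/
def SStar (n : ℕ) : SimpleGraph (Unit ⊕ Fin n ⊕ Fin n) :=
  SimpleGraph.fromRel (fun a b =>
    (∃ i : Fin n, a = Sum.inl () ∧ b = Sum.inr (Sum.inl i)) ∨
    (∃ i : Fin n, a = Sum.inr (Sum.inl i) ∧ b = Sum.inr (Sum.inr i)))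

/-- `S̃_n` : `S*_n` together with the edges `x zᵢ`. -/
def STilde (n : ℕ) : SimpleGraph (Unit ⊕ Fin n ⊕ Fin n) :=
  SimpleGraph.fromRel (fun a b =>
    (∃ i : Fin n, a = Sum.inl () ∧ b = Sum.inr (Sum.inl i)) ∨
    (∃ i : Fin n, a = Sum.inr (Sum.inl i) ∧ b = Sum.inr (Sum.inr i)) ∨
    (∃ i : Fin n, a = Sum.inl () ∧ b = Sum.inr (Sum.inr i)))

/-- `F⁽¹⁾_n` : vertices `x₁ = inl 0`, `x₂ = inl 1`, `yᵢ = inr (inl i)`, `zᵢ = inr (inr i)`;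
edges `x₁x₂`, `x₁y₁`, `x₁z₁`, and two paths `y₁⋯yₙ`, `z₁⋯zₙ`. -/
def F1 (n : ℕ) : SimpleGraph (Fin 2 ⊕ Fin n ⊕ Fin n) :=
  SimpleGraph.fromRel (fun a b =>
    (a = Sum.inl 0 ∧ b = Sum.inl 1) ∨
    (∃ j : Fin n, (j : ℕ) = 0 ∧ a = Sum.inl 0 ∧ b = Sum.inr (Sum.inl j)) ∨
    (∃ j : Fin n, (j : ℕ) = 0 ∧ a = Sum.inl 0 ∧ b = Sum.inr (Sum.inr j)) ∨
    (∃ i j : Fin n, (i : ℕ) + 1 = (j : ℕ) ∧ a = Sum.inr (Sum.inl i) ∧ b = Sum.inr (Sum.inl j)) ∨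
    (∃ i j : Fin n, (i : ℕ) + 1 = (j : ℕ) ∧ a = Sum.inr (Sum.inr i) ∧ b = Sum.inr (Sum.inr j)))

/-- `F⁽²⁾_n` : vertex `x₁ = inl ()`, `yᵢ = inr (inl i)`, `zᵢ = inr (inr i)`;
edges `x₁y₁`, `x₁z₁`, `y₁z₁`, and two paths `y₁⋯yₙ`, `z₁⋯zₙ`. -/
def F2 (n : ℕ) : SimpleGraph (Unit ⊕ Fin n ⊕ Fin n) :=
  SimpleGraph.fromRel (fun a b =>
    (∃ j : Fin n, (j : ℕ) = 0 ∧ a = Sum.inl () ∧ b = Sum.inr (Sum.inl j)) ∨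
    (∃ j : Fin n, (j : ℕ) = 0 ∧ a = Sum.inl () ∧ b = Sum.inr (Sum.inr j)) ∨
    (∃ i j : Fin n, (i : ℕ) = 0 ∧ (j : ℕ) = 0 ∧ a = Sum.inr (Sum.inl i) ∧ b = Sum.inr (Sum.inr j)) ∨
    (∃ i j : Fin n, (i : ℕ) + 1 = (j : ℕ) ∧ a = Sum.inr (Sum.inl i) ∧ b = Sum.inr (Sum.inl j)) ∨
    (∃ i j : Fin n, (i : ℕ) + 1 = (j : ℕ) ∧ a = Sum.inr (Sum.inr i) ∧ b = Sum.inr (Sum.inr j)))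

/-- `F⁽³⁾_n` : vertices `xᵢ = inl i`, `yᵢ = inr (inl i)`, `zᵢ = inr (inr i)`;
edges `xᵢy₁`, `xᵢz₁` for all `i`, and two paths `y₁⋯yₙ`, `z₁⋯zₙ`. -/
def F3 (n : ℕ) : SimpleGraph (Fin n ⊕ Fin n ⊕ Fin n) :=
  SimpleGraph.fromRel (fun a b =>
    (∃ (i j : Fin n), (j : ℕ) = 0 ∧ a = Sum.inl i ∧ b = Sum.inr (Sum.inl j)) ∨
    (∃ (i j : Fin n), (j : ℕ) = 0 ∧ a = Sum.inl i ∧ b = Sum.inr (Sum.inr j)) ∨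
    (∃ i j : Fin n, (i : ℕ) + 1 = (j : ℕ) ∧ a = Sum.inr (Sum.inl i) ∧ b = Sum.inr (Sum.inl j)) ∨
    (∃ i j : Fin n, (i : ℕ) + 1 = (j : ℕ) ∧ a = Sum.inr (Sum.inr i) ∧ b = Sum.inr (Sum.inr j)))

/-- `F⁽⁴⁾_n` : `F⁽³⁾_n` with only `x₁, x₂` kept (no edge `x₁x₂`). -/
def F4 (n : ℕ) : SimpleGraph (Fin 2 ⊕ Fin n ⊕ Fin n) :=
  SimpleGraph.fromRel (fun a b =>
    (∃ (i : Fin 2) (j : Fin n), (j : ℕ) = 0 ∧ a = Sum.inl i ∧ b = Sum.inr (Sum.inl j)) ∨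
    (∃ (i : Fin 2) (j : Fin n), (j : ℕ) = 0 ∧ a = Sum.inl i ∧ b = Sum.inr (Sum.inr j)) ∨
    (∃ i j : Fin n, (i : ℕ) + 1 = (j : ℕ) ∧ a = Sum.inr (Sum.inl i) ∧ b = Sum.inr (Sum.inl j)) ∨
    (∃ i j : Fin n, (i : ℕ) + 1 = (j : ℕ) ∧ a = Sum.inr (Sum.inr i) ∧ b = Sum.inr (Sum.inr j)))

/-- `F⁽⁵⁾_n` : `F⁽⁴⁾_n` plus the edge `x₁x₂`. -/
def F5 (n : ℕ) : SimpleGraph (Fin 2 ⊕ Fin n ⊕ Fin n) :=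
  SimpleGraph.fromRel (fun a b =>
    (a = Sum.inl 0 ∧ b = Sum.inl 1) ∨
    (∃ (i : Fin 2) (j : Fin n), (j : ℕ) = 0 ∧ a = Sum.inl i ∧ b = Sum.inr (Sum.inl j)) ∨
    (∃ (i : Fin 2) (j : Fin n), (j : ℕ) = 0 ∧ a = Sum.inl i ∧ b = Sum.inr (Sum.inr j)) ∨
    (∃ i j : Fin n, (i : ℕ) + 1 = (j : ℕ) ∧ a = Sum.inr (Sum.inl i) ∧ b = Sum.inr (Sum.inl j)) ∨
    (∃ i j : Fin n, (i : ℕ) + 1 = (j : ℕ) ∧ a = Sum.inr (Sum.inr i) ∧ b = Sum.inr (Sum.inr j)))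

/-- The Ramsey number `R(a,b)` : least `R` such that every simple graph on at least `R`
vertices contains a clique of size `a` or an independent set of size `b`. -/
noncomputable def ramseyNumber (a b : ℕ) : ℕ :=
  sInf {R : ℕ | ∀ (m : ℕ) (G : SimpleGraph (Fin m)), R ≤ m →
    (∃ s : Finset (Fin m), s.card = a ∧ ∀ u ∈ s, ∀ v ∈ s, u ≠ v → G.Adj u v) ∨
    (∃ s : Finset (Fin m), s.card = b ∧ ∀ u ∈ s, ∀ v ∈ s, u ≠ v → ¬ G.Adj u v)}

/-- `ξ_{n,i} = ((R(n-1,n)-1)^i - 1)/(R(n-1,n)-2)`. -/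
noncomputable def xi (n i : ℕ) : ℕ :=
  ((ramseyNumber (n - 1) n - 1) ^ i - 1) / (ramseyNumber (n - 1) n - 2)


/-!
The upper bounds are explicit covers by consecutive blocks: edges of `K_n`, induced paths
`zᵢ yᵢ x yⱼ zⱼ` of `S*_n` and `yᵢ x yⱼ` of `K_{1,n}`, closed neighbourhoods of every third vertex
of `P_n`; for `S̃_n`, the partition into `{x}` and the edges `yᵢzᵢ`.

The lower bounds are packing arguments. Induced stars and paths are triangle-free, so each meets a
clique in at most two vertices. An induced path has at most two vertices with at most one
neighbour in it, and two leaves of an induced star share its centre; hence each contains at most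
two of the leaves `zᵢ` of `S*_n`, and each induced path of `K_{1,n}` at most two of its leaves.
An induced star of `P_n` has at most three vertices. In a partition of `S̃_n`, the part containing
`x` misses a vertex of every triangle `x yᵢ zᵢ`; the parts covering these vertices avoid `x`, so
they have maximum degree one, lie inside a single edge `yᵢzᵢ`, and are therefore pairwise distinct.
-/

variable {V W : Type*}

def IsInducedSPSet (G : SimpleGraph V) (S : Set V) : Prop :=
  IsInducedStarSet G S ∨ IsInducedPathSet G S

section CoverNumber

variable {pred : Set V → Prop}

lemma coverNumber_le {P : Finset (Set V)} (hP : IsCoverBy P pred) : coverNumber pred ≤ P.card :=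
  Nat.sInf_le ⟨P, rfl, hP⟩

lemma le_coverNumber {k : ℕ} (hne : ∃ P, IsCoverBy P pred)
    (h : ∀ P, IsCoverBy P pred → k ≤ P.card) : k ≤ coverNumber pred := by
  obtain ⟨P, hP⟩ := hne
  exact le_csInf ⟨_, P, rfl, hP⟩ fun _ ⟨Q, hQ, hQcov⟩ => hQ ▸ h Q hQcov

lemma partitionNumber_le {P : Finset (Set V)} (hP : IsPartitionBy P pred) :
    partitionNumber pred ≤ P.card :=
  Nat.sInf_le ⟨P, rfl, hP⟩

lemma le_partitionNumber {k : ℕ} (hne : ∃ P, IsPartitionBy P pred)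
    (h : ∀ P, IsPartitionBy P pred → k ≤ P.card) : k ≤ partitionNumber pred := by
  obtain ⟨P, hP⟩ := hne
  exact le_csInf ⟨_, P, rfl, hP⟩ fun _ ⟨Q, hQ, hQpart⟩ => hQ ▸ h Q hQpart

lemma card_le_mul_card_of_isCoverBy {P : Finset (Set V)} (hP : IsCoverBy P pred)
    (T : Finset V) {c : ℕ} (hT : ∀ S, pred S → ∀ F ⊆ T, ↑F ⊆ S → F.card ≤ c) :
    T.card ≤ c * P.card := by
  classical
  calc T.card ≤ (P.biUnion fun S => T.filter (· ∈ S)).card := by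
        refine Finset.card_le_card fun v hv => ?_
        obtain ⟨S, hS, hvS⟩ := hP.2 v
        exact Finset.mem_biUnion.2 ⟨S, hS, Finset.mem_filter.2 ⟨hv, hvS⟩⟩
    _ ≤ ∑ S ∈ P, (T.filter (· ∈ S)).card := Finset.card_biUnion_le
    _ ≤ ∑ _S ∈ P, c := Finset.sum_le_sum fun S hS =>
        hT S (hP.1 S hS) _ (Finset.filter_subset _ T) fun _ hv => (Finset.mem_filter.1 hv).2
    _ = c * P.card := by rw [Finset.sum_const, smul_eq_mul, mul_comm]

lemma exists_isCoverBy_card_le {k : ℕ} (B : ℕ → Set V) (hB : ∀ i < k, pred (B i)) (g : V → ℕ)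
    (hg : ∀ v, g v < k ∧ v ∈ B (g v)) : ∃ P : Finset (Set V), IsCoverBy P pred ∧ P.card ≤ k := by
  classical
  refine ⟨(Finset.range k).image B, ⟨?_, fun v => ⟨B (g v), ?_, (hg v).2⟩⟩,
    Finset.card_image_le.trans (Finset.card_range k).le⟩
  · simp only [Finset.mem_image, Finset.mem_range]
    rintro _ ⟨i, hi, rfl⟩
    exact hB i hi
  · exact Finset.mem_image_of_mem _ (Finset.mem_range.2 (hg v).1)

/-- The hypothesis `hk` says that `k ≤ ⌈#T / c⌉`. -/
lemma coverNumber_eq_of_blocks {k c : ℕ} (B : ℕ → Set V) (hB : ∀ i < k, pred (B i))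
    (g : V → ℕ) (hg : ∀ v, g v < k ∧ v ∈ B (g v)) (T : Finset V)
    (hT : ∀ S, pred S → ∀ F ⊆ T, ↑F ⊆ S → F.card ≤ c) (hk : c * k < T.card + c) :
    coverNumber pred = k := by
  obtain ⟨P, hP, hPk⟩ := exists_isCoverBy_card_le B hB g hg
  refine le_antisymm ((coverNumber_le hP).trans hPk) (le_coverNumber ⟨P, hP⟩ fun Q hQ => ?_)
  have hTQ := card_le_mul_card_of_isCoverBy hQ T hT
  have : c * k < c * (Q.card + 1) := by rw [mul_add, mul_one]; omega
  exact Nat.lt_succ_iff.1 (Nat.lt_of_mul_lt_mul_left this)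

end CoverNumber

section Embedding

variable {G : SimpleGraph V} {H : SimpleGraph W}

lemma nonempty_induce_iso_iff {S : Set V} :
    Nonempty (G.induce S ≃g H) ↔ ∃ e : H ↪g G, Set.range e = S := by
  refine ⟨fun ⟨φ⟩ => ⟨(Embedding.induce S).comp φ.symm.toEmbedding, ?_⟩, fun ⟨e, he⟩ => ?_⟩
  · ext v
    simp
  · subst he
    exact ⟨e.isoInduceRange.symm⟩

lemma SimpleGraph.Embedding.neighborSet_subsingleton (e : H ↪g G) {p : W}
    (h : (G.neighborSet (e p) ∩ Set.range e).Subsingleton) : (H.neighborSet p).Subsingleton :=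
  fun a ha b hb => e.injective (h ⟨e.map_adj_iff.2 ha, a, rfl⟩ ⟨e.map_adj_iff.2 hb, b, rfl⟩)

lemma SimpleGraph.Embedding.disjoint_neighborSet (e : H ↪g G) {p q : W}
    (h : Disjoint (G.neighborSet (e p)) (G.neighborSet (e q))) :
    Disjoint (H.neighborSet p) (H.neighborSet q) :=
  Set.disjoint_left.2 fun _ hp hq => Set.disjoint_left.1 h (e.map_adj_iff.2 hp) (e.map_adj_iff.2 hq)

end Embedding

lemma Finset.card_le_card_preimage_of_subset_range {f : W → V} (hf : Function.Injective f)
    {F : Finset V} (hF : ↑F ⊆ Set.range f) : F.card ≤ (F.preimage f hf.injOn).card :=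
  Finset.card_le_card_of_surjOn f fun v hv => by
    obtain ⟨p, rfl⟩ := hF hv
    exact ⟨p, by simpa using hv, rfl⟩

lemma SimpleGraph.CliqueFreeOn.card_lt_of_isClique {G : SimpleGraph V} {s : Set V} {n : ℕ}
    (h : G.CliqueFreeOn s n) {t : Finset V} (hts : ↑t ⊆ s) (ht : G.IsClique t) : t.card < n := by
  by_contra! hn
  obtain ⟨u, hut, hu⟩ := Finset.exists_subset_card_eq hn
  exact h ((Finset.coe_subset.2 hut).trans hts) ⟨ht.subset (Finset.coe_subset.2 hut), hu⟩

section PathGraph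

variable {m : ℕ}

lemma pathGraph_cliqueFree_three : (pathGraph m).CliqueFree 3 :=
  (pathGraph.bicoloring m).colorable.cliqueFree (by simp)

lemma pathGraph_val_eq_zero_or_add_one_eq {p : Fin m}
    (hp : ((pathGraph m).neighborSet p).Subsingleton) : p.val = 0 ∨ p.val + 1 = m := by
  by_contra! h
  have := congrArg Fin.val <| hp (x := ⟨p - 1, by omega⟩) (y := ⟨p + 1, by omega⟩)
    (by simp [pathGraph_adj]; omega) (by simp [pathGraph_adj])
  simp at this

lemma pathGraph_card_le_two {A : Finset (Fin m)}
    (hA : ∀ p ∈ A, ((pathGraph m).neighborSet p).Subsingleton) : A.card ≤ 2 :=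
  calc A.card = (A.image Fin.val).card := (Finset.card_image_of_injective _ Fin.val_injective).symm
    _ ≤ ({0, m - 1} : Finset ℕ).card := Finset.card_le_card fun k hk => by
        obtain ⟨p, hp, rfl⟩ := Finset.mem_image.1 hk
        have := pathGraph_val_eq_zero_or_add_one_eq (hA p hp)
        simp only [Finset.mem_insert, Finset.mem_singleton]
        omega
    _ ≤ 2 := Finset.card_le_two

lemma pathGraph_adj_of_forall_neighborSet_subsingleton
    (h : ∀ p, ((pathGraph m).neighborSet p).Subsingleton) {p q : Fin m} (hpq : p ≠ q) :
    (pathGraph m).Adj p q := by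
  have hm : m ≤ 2 := by
    by_contra! hm
    have := pathGraph_val_eq_zero_or_add_one_eq (h ⟨1, by omega⟩)
    simp at this
    omega
  rw [pathGraph_adj]
  have := Fin.val_ne_of_ne hpq
  omega

lemma pathGraph_card_le_three {c : Fin m} {F : Finset (Fin m)}
    (hF : ↑F ⊆ insert c ((pathGraph m).neighborSet c)) : F.card ≤ 3 :=
  calc F.card = (F.image Fin.val).card := (Finset.card_image_of_injective _ Fin.val_injective).symm
    _ ≤ (Finset.Icc (c.val - 1) (c.val + 1)).card := Finset.card_le_card fun k hk => by
        obtain ⟨p, hp, rfl⟩ := Finset.mem_image.1 hk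
        have := hF hp
        simp only [Set.mem_insert_iff, mem_neighborSet, pathGraph_adj, Fin.ext_iff] at this
        simp only [Finset.mem_Icc]
        omega
    _ ≤ 3 := by simp; omega

lemma pathGraph_neighborSet_nonempty (hm : 2 ≤ m) (c : Fin m) :
    ((pathGraph m).neighborSet c).Nonempty := by
  by_cases hc : c.val = 0
  · exact ⟨⟨1, hm⟩, by simp [pathGraph_adj, hc]⟩
  · exact ⟨⟨c - 1, by omega⟩, by simp [pathGraph_adj]; omega⟩

end PathGraph

section StarGraph

variable {m : ℕ}

lemma starGraphK1_cliqueFree_three : (starGraphK1 m).CliqueFree 3 :=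
  (CompleteBipartiteGraph.bicoloring _ _).colorable.cliqueFree (by simp)

lemma starGraphK1_neighborSet_inr (i : Fin m) :
    (starGraphK1 m).neighborSet (Sum.inr i) = {Sum.inl ()} := by
  ext (_ | j) <;> simp [starGraphK1]

lemma starGraphK1_card_le_two {A : Finset (Unit ⊕ Fin m)}
    (hA : (A : Set (Unit ⊕ Fin m)).Pairwise fun p q =>
      Disjoint ((starGraphK1 m).neighborSet p) ((starGraphK1 m).neighborSet q)) :
    A.card ≤ 2 := by
  have : Set.InjOn Sum.isLeft (A : Set (Unit ⊕ Fin m)) := by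
    rintro (_ | i) hp (_ | j) hq hpq
    · rfl
    · simp at hpq
    · simp at hpq
    · by_contra hne
      exact Set.disjoint_left.1 (hA hp hq hne) (show Sum.inl () ∈ _ by simp [starGraphK1])
        (by simp [starGraphK1])
  simpa using Finset.card_le_card_of_injOn _ (fun _ _ => Finset.mem_univ _) this

lemma starGraphK1_adj_of_forall_neighborSet_subsingleton
    (h : ∀ p, ((starGraphK1 m).neighborSet p).Subsingleton) {p q : Unit ⊕ Fin m} (hpq : p ≠ q) :
    (starGraphK1 m).Adj p q := by
  rcases p with _ | i <;> rcases q with _ | j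
  · exact absurd rfl hpq
  · simp [starGraphK1]
  · simp [starGraphK1]
  · exact absurd (h (Sum.inl ()) (by simp [starGraphK1] : (starGraphK1 m).Adj _ (Sum.inr i))
      (by simp [starGraphK1] : (starGraphK1 m).Adj _ (Sum.inr j))) hpq

end StarGraph

section InducedSets

variable {G : SimpleGraph V} {S : Set V}

lemma IsInducedSPSet.cliqueFreeOn (h : IsInducedSPSet G S) : G.CliqueFreeOn S 3 := by
  rw [← cliqueFree_induce_iff]
  rcases h with ⟨m, -, ⟨φ⟩⟩ | ⟨m, -, ⟨φ⟩⟩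
  · exact starGraphK1_cliqueFree_three.comap φ.isContained
  · exact pathGraph_cliqueFree_three.comap φ.isContained

lemma IsInducedPathSet.card_le_two (h : IsInducedPathSet G S) {F : Finset V} (hF : ↑F ⊆ S)
    (hdeg : ∀ v ∈ F, (G.neighborSet v ∩ S).Subsingleton) : F.card ≤ 2 := by
  obtain ⟨m, -, hφ⟩ := h
  obtain ⟨e, rfl⟩ := nonempty_induce_iso_iff.1 hφ
  refine (Finset.card_le_card_preimage_of_subset_range e.injective hF).trans
    (pathGraph_card_le_two fun p hp => Embedding.neighborSet_subsingleton e (hdeg _ ?_))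
  simpa using hp

lemma IsInducedStarSet.card_le_two (h : IsInducedStarSet G S) {F : Finset V} (hF : ↑F ⊆ S)
    (hdisj : (F : Set V).Pairwise fun u v => Disjoint (G.neighborSet u) (G.neighborSet v)) :
    F.card ≤ 2 := by
  obtain ⟨m, -, hφ⟩ := h
  obtain ⟨e, rfl⟩ := nonempty_induce_iso_iff.1 hφ
  refine (Finset.card_le_card_preimage_of_subset_range e.injective hF).trans
    (starGraphK1_card_le_two fun p hp q hq hpq => Embedding.disjoint_neighborSet e ?_)
  simp only [Finset.coe_preimage, Set.mem_preimage, Finset.mem_coe] at hp hq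
  exact hdisj hp hq (e.injective.ne hpq)

lemma IsInducedStarSet.exists_subset_insert_neighborSet (h : IsInducedStarSet G S) :
    ∃ c, S ⊆ insert c (G.neighborSet c) := by
  obtain ⟨m, -, hφ⟩ := h
  obtain ⟨e, rfl⟩ := nonempty_induce_iso_iff.1 hφ
  refine ⟨e (Sum.inl ()), ?_⟩
  rintro _ ⟨_ | i, rfl⟩
  · exact Set.mem_insert _ _
  · exact Set.mem_insert_of_mem _ (e.map_adj_iff.2 (by simp [starGraphK1]))

lemma IsInducedSPSet.pairwise_adj (h : IsInducedSPSet G S)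
    (hdeg : ∀ v ∈ S, (G.neighborSet v ∩ S).Subsingleton) : S.Pairwise G.Adj := by
  rcases h with ⟨m, -, hφ⟩ | ⟨m, -, hφ⟩ <;> obtain ⟨e, rfl⟩ := nonempty_induce_iso_iff.1 hφ <;>
    rintro _ ⟨p, rfl⟩ _ ⟨q, rfl⟩ hpq <;> refine e.map_adj_iff.2 ?_
  · exact starGraphK1_adj_of_forall_neighborSet_subsingleton
      (fun p => Embedding.neighborSet_subsingleton e (hdeg _ ⟨p, rfl⟩)) (ne_of_apply_ne e hpq)
  · exact pathGraph_adj_of_forall_neighborSet_subsingleton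
      (fun p => Embedding.neighborSet_subsingleton e (hdeg _ ⟨p, rfl⟩)) (ne_of_apply_ne e hpq)

lemma isInducedPathSet_range {m : ℕ} (hm : 1 ≤ m) {f : Fin m → V} (hf : Function.Injective f)
    (hadj : ∀ a b, G.Adj (f a) (f b) ↔ (pathGraph m).Adj a b) :
    IsInducedPathSet G (Set.range f) :=
  ⟨m, hm, nonempty_induce_iso_iff.2 ⟨⟨⟨f, hf⟩, hadj _ _⟩, rfl⟩⟩

lemma isInducedPathSet_singleton (v : V) : IsInducedPathSet G {v} := by
  simpa using isInducedPathSet_range (G := G) le_rfl (f := ![v])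
    (fun a b _ => Subsingleton.elim a b) (by simp [pathGraph_adj])

lemma isInducedPathSet_pair {u v : V} (h : G.Adj u v) : IsInducedPathSet G {u, v} := by
  have hf : Function.Injective ![u, v] := by
    intro a b
    fin_cases a <;> fin_cases b <;> simp [h.ne, h.ne.symm]
  rw [← Matrix.range_cons_cons_empty u v ![]]
  exact isInducedPathSet_range one_le_two hf
    (by simp [Fin.forall_fin_two, pathGraph_adj, h, h.symm])

lemma isInducedStarSet_insert_neighborSet (hG : G.CliqueFree 3) {c : V}
    (hfin : (G.neighborSet c).Finite) (hne : (G.neighborSet c).Nonempty) :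
    IsInducedStarSet G (insert c (G.neighborSet c)) := by
  set L := hfin.toFinset
  have hmem (k : Fin L.card) : G.Adj c (L.equivFin.symm k) :=
    hfin.mem_toFinset.1 (L.equivFin.symm k).2
  let f : Unit ⊕ Fin L.card → V := Sum.elim (fun _ => c) fun k => L.equivFin.symm k
  have hf : Function.Injective f :=
    Function.Injective.sumElim (fun _ _ _ => rfl)
      (Subtype.val_injective.comp L.equivFin.symm.injective) fun _ k => G.ne_of_adj (hmem k)
  refine ⟨L.card, Finset.card_pos.2 (hfin.toFinset_nonempty.2 hne),
    nonempty_induce_iso_iff.2 ⟨⟨⟨f, hf⟩, ?_⟩, ?_⟩⟩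
  · rintro (_ | k) (_ | l)
    · simp [f, starGraphK1]
    · simpa [f, starGraphK1] using hmem l
    · simpa [f, starGraphK1] using (hmem k).symm
    · rcases eq_or_ne k l with rfl | hkl
      · simp [f, starGraphK1]
      · simpa [f, starGraphK1] using
          isIndepSet_neighborSet_of_triangleFree G hG c (hmem k) (hmem l) (by simpa using hkl)
  · ext v
    simp [f, Set.Sum.elim_range, L, L.equivFin.symm.exists_congr_left]

end InducedSets

lemma eq_castSucc_or_eq_succ_clamp (m : ℕ) (j : Fin (m + 2)) :
    j = (Fin.clamp (2 * (j / 2 : ℕ)) m).castSucc ∨ j = (Fin.clamp (2 * (j / 2 : ℕ)) m).succ := by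
  simp only [Fin.ext_iff, Fin.val_castSucc, Fin.val_succ, Fin.clamp]
  omega

theorem inspc_completeGraph {n : ℕ} (hn : 2 ≤ n) :
    inspc (completeGraph (Fin n)) = (n + 1) / 2 := by
  obtain ⟨m, rfl⟩ := Nat.exists_eq_add_of_le' hn
  refine coverNumber_eq_of_blocks (c := 2)
    (fun i => {(Fin.clamp (2 * i) m).castSucc, (Fin.clamp (2 * i) m).succ})
    (fun i _ => Or.inr (isInducedPathSet_pair Fin.castSucc_lt_succ.ne)) (fun j => j / 2)
    (fun j => ⟨by omega, by simpa using eq_castSucc_or_eq_succ_clamp m j⟩) Finset.univ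
    (fun S hS F _ hF => Nat.lt_succ_iff.1 ((IsInducedSPSet.cliqueFreeOn hS).card_lt_of_isClique hF
      (IsClique.top _))) (by simp; omega)

section SStar

variable {n : ℕ}

lemma sStar_neighborSet_inr_inr (i : Fin n) :
    (SStar n).neighborSet (Sum.inr (Sum.inr i)) = {Sum.inr (Sum.inl i)} := by
  ext (_ | j | j) <;> simp [SStar, eq_comm]

lemma sStar_isInducedPathSet {i j : Fin n} (hij : i ≠ j) :
    IsInducedPathSet (SStar n) (Set.range ![Sum.inr (Sum.inr i), Sum.inr (Sum.inl i), Sum.inl (),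
      Sum.inr (Sum.inl j), Sum.inr (Sum.inr j)]) := by
  refine isInducedPathSet_range (by norm_num) (fun a b => ?_) fun a b => ?_
  · fin_cases a <;> fin_cases b <;> simp [hij, hij.symm]
  · fin_cases a <;> fin_cases b <;> simp [SStar, pathGraph_adj, hij, hij.symm]

theorem inspc_sStar (hn : 2 ≤ n) : inspc (SStar n) = (n + 1) / 2 := by
  obtain ⟨m, rfl⟩ := Nat.exists_eq_add_of_le' hn
  refine coverNumber_eq_of_blocks (c := 2)
    (fun i => Set.range ![Sum.inr (Sum.inr (Fin.clamp (2 * i) m).castSucc),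
      Sum.inr (Sum.inl (Fin.clamp (2 * i) m).castSucc), Sum.inl (),
      Sum.inr (Sum.inl (Fin.clamp (2 * i) m).succ), Sum.inr (Sum.inr (Fin.clamp (2 * i) m).succ)])
    (fun i _ => Or.inr (sStar_isInducedPathSet Fin.castSucc_lt_succ.ne))
    (Sum.elim (fun _ => 0) (Sum.elim (fun j => j / 2) fun j => j / 2)) ?_
    (Finset.univ.map (Function.Embedding.inr.trans Function.Embedding.inr)) ?_ (by simp; omega)
  · rintro (_ | j | j)
    · exact ⟨by simp, 2, rfl⟩
    · refine ⟨by simp; omega, ?_⟩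
      rcases eq_castSucc_or_eq_succ_clamp m j with h | h
      · exact ⟨1, congrArg (Sum.inr ∘ Sum.inl) h.symm⟩
      · exact ⟨3, congrArg (Sum.inr ∘ Sum.inl) h.symm⟩
    · refine ⟨by simp; omega, ?_⟩
      rcases eq_castSucc_or_eq_succ_clamp m j with h | h
      · exact ⟨0, congrArg (Sum.inr ∘ Sum.inr) h.symm⟩
      · exact ⟨4, congrArg (Sum.inr ∘ Sum.inr) h.symm⟩
  · intro S hS F hFT hFS
    have hleaf : ∀ v ∈ F, ∃ i, v = Sum.inr (Sum.inr i) := fun v hv => by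
      simpa [eq_comm] using hFT hv
    rcases hS with hstar | hpath
    · refine hstar.card_le_two hFS fun u hu v hv huv => ?_
      obtain ⟨i, rfl⟩ := hleaf u hu
      obtain ⟨j, rfl⟩ := hleaf v hv
      simp_all [sStar_neighborSet_inr_inr]
    · refine hpath.card_le_two hFS fun v hv => ?_
      obtain ⟨i, rfl⟩ := hleaf v hv
      rw [sStar_neighborSet_inr_inr]
      exact Set.subsingleton_singleton.anti Set.inter_subset_left

end SStar

section STilde

variable {n : ℕ}

lemma sTilde_exists_isPartitionBy :
    ∃ P, IsPartitionBy P (IsInducedSPSet (STilde n)) ∧ P.card ≤ n + 1 := by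
  classical
  refine ⟨insert {Sum.inl ()} (Finset.univ.image fun i =>
    ({Sum.inr (Sum.inl i), Sum.inr (Sum.inr i)} : Set (Unit ⊕ Fin n ⊕ Fin n))), ⟨⟨?_, ?_⟩, ?_⟩, ?_⟩
  · simp only [Finset.mem_insert, Finset.mem_image, Finset.mem_univ, true_and]
    rintro _ (rfl | ⟨i, rfl⟩)
    · exact Or.inr (isInducedPathSet_singleton _)
    · exact Or.inr (isInducedPathSet_pair (by simp [STilde]))
  · rintro (_ | i | i)
    · exact ⟨_, Finset.mem_insert_self _ _, rfl⟩
    · exact ⟨_, Finset.mem_insert_of_mem (Finset.mem_image_of_mem _ (Finset.mem_univ i)), by simp⟩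
    · exact ⟨_, Finset.mem_insert_of_mem (Finset.mem_image_of_mem _ (Finset.mem_univ i)), by simp⟩
  · simp only [Finset.mem_insert, Finset.mem_image, Finset.mem_univ, true_and]
    rintro _ (rfl | ⟨i, rfl⟩) _ (rfl | ⟨j, rfl⟩) hne v hvS hvT <;> simp_all
    rcases hvS with rfl | rfl <;> simp_all [eq_comm]
  · refine (Finset.card_insert_le _ _).trans (Nat.succ_le_succ ?_)
    simpa using Finset.card_image_le (s := (Finset.univ : Finset (Fin n)))

lemma sTilde_neighborSet_inter_subsingleton {T : Set (Unit ⊕ Fin n ⊕ Fin n)}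
    (hx : Sum.inl () ∉ T) {v : Unit ⊕ Fin n ⊕ Fin n} (hv : v ≠ Sum.inl ()) :
    ((STilde n).neighborSet v ∩ T).Subsingleton := by
  rintro a ⟨ha, haT⟩ b ⟨hb, hbT⟩
  have ha' : a ≠ Sum.inl () := ne_of_mem_of_not_mem haT hx
  have hb' : b ≠ Sum.inl () := ne_of_mem_of_not_mem hbT hx
  rcases v with _ | i | i <;> rcases a with _ | j | j <;> rcases b with _ | k | k <;>
    simp_all [STilde]

lemma sTilde_eq_of_eq_or_adj {i j : Fin n} {u w : Unit ⊕ Fin n ⊕ Fin n}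
    (hu : u = Sum.inr (Sum.inl i) ∨ u = Sum.inr (Sum.inr i))
    (hw : w = Sum.inr (Sum.inl j) ∨ w = Sum.inr (Sum.inr j)) (h : u = w ∨ (STilde n).Adj u w) :
    i = j := by
  rcases hu with rfl | rfl <;> rcases hw with rfl | rfl <;> simpa [STilde, eq_comm] using h

lemma sTilde_card_le_of_isPartitionBy {Q : Finset (Set (Unit ⊕ Fin n ⊕ Fin n))}
    (hQ : IsPartitionBy Q (IsInducedSPSet (STilde n))) : n + 1 ≤ Q.card := by
  classical
  obtain ⟨⟨hpred, hcov⟩, hdisj⟩ := hQ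
  obtain ⟨S₀, hS₀, hxS₀⟩ := hcov (Sum.inl ())
  have hw : ∀ i, ∃ w, (w = Sum.inr (Sum.inl i) ∨ w = Sum.inr (Sum.inr i)) ∧ w ∉ S₀ := by
    intro i
    by_contra! h
    refine (hpred S₀ hS₀).cliqueFreeOn (t := {Sum.inl (), Sum.inr (Sum.inl i), Sum.inr (Sum.inr i)})
      ?_ (is3Clique_triple_iff.2 (by simp [STilde]))
    simp [Set.insert_subset_iff, hxS₀, h]
  choose w hw hwS₀ using hw
  choose T hTQ hwT using fun i => hcov (w i)
  have hTS₀ : ∀ i, T i ≠ S₀ := fun i h => hwS₀ i (h ▸ hwT i)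
  have hxT : ∀ i, Sum.inl () ∉ T i := fun i hx => hdisj S₀ hS₀ (T i) (hTQ i) (hTS₀ i).symm _ hxS₀ hx
  have hT : Function.Injective T := by
    intro i j hij
    have hadj := (hpred (T i) (hTQ i)).pairwise_adj fun v hv =>
      sTilde_neighborSet_inter_subsingleton (hxT i) (ne_of_mem_of_not_mem hv (hxT i))
    refine sTilde_eq_of_eq_or_adj (hw i) (hw j) ((eq_or_ne (w i) (w j)).imp id fun hne => ?_)
    exact hadj (hwT i) (hij ▸ hwT j) hne
  calc n + 1 = (insert S₀ (Finset.univ.image T)).card := by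
        rw [Finset.card_insert_of_notMem, Finset.card_image_of_injective _ hT]
        · simp
        · simpa using fun i => hTS₀ i
    _ ≤ Q.card := Finset.card_le_card <| Finset.insert_subset hS₀ fun S hS => by
        obtain ⟨i, -, rfl⟩ := Finset.mem_image.1 hS
        exact hTQ i

theorem inspp_sTilde (n : ℕ) : inspp (STilde n) = n + 1 := by
  obtain ⟨P, hP, hPcard⟩ := sTilde_exists_isPartitionBy (n := n)
  exact le_antisymm ((partitionNumber_le hP).trans hPcard)
    (le_partitionNumber ⟨P, hP⟩ fun _ => sTilde_card_le_of_isPartitionBy)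

end STilde

lemma starGraphK1_isInducedPathSet {n : ℕ} {i j : Fin n} (hij : i ≠ j) :
    IsInducedPathSet (starGraphK1 n) (Set.range ![Sum.inr i, Sum.inl (), Sum.inr j]) := by
  refine isInducedPathSet_range (by norm_num) (fun a b => ?_) fun a b => ?_
  · fin_cases a <;> fin_cases b <;> simp [hij, hij.symm]
  · fin_cases a <;> fin_cases b <;> simp [starGraphK1, pathGraph_adj]

theorem inpc_starGraphK1 {n : ℕ} (hn : 2 ≤ n) : inpc (starGraphK1 n) = (n + 1) / 2 := by
  obtain ⟨m, rfl⟩ := Nat.exists_eq_add_of_le' hn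
  refine coverNumber_eq_of_blocks (c := 2)
    (fun i => Set.range ![Sum.inr (Fin.clamp (2 * i) m).castSucc, Sum.inl (),
      Sum.inr (Fin.clamp (2 * i) m).succ])
    (fun i _ => starGraphK1_isInducedPathSet Fin.castSucc_lt_succ.ne)
    (Sum.elim (fun _ => 0) fun j => j / 2) ?_ (Finset.univ.map Function.Embedding.inr)
    (fun S hS F hFT hFS => hS.card_le_two hFS fun v hv => ?_) (by simp; omega)
  · rintro (_ | j)
    · exact ⟨by simp, 1, rfl⟩
    · refine ⟨by simp; omega, ?_⟩
      rcases eq_castSucc_or_eq_succ_clamp m j with h | h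
      · exact ⟨0, congrArg Sum.inr h.symm⟩
      · exact ⟨2, congrArg Sum.inr h.symm⟩
  · obtain ⟨i, -, rfl⟩ := Finset.mem_map.1 (hFT hv)
    rw [Function.Embedding.inr_apply, starGraphK1_neighborSet_inr]
    exact Set.subsingleton_singleton.anti Set.inter_subset_left

theorem insc_pathGraph {n : ℕ} (hn : 2 ≤ n) : insc (pathGraph n) = (n + 2) / 3 := by
  obtain ⟨m, rfl⟩ := Nat.exists_eq_add_of_le' hn
  refine coverNumber_eq_of_blocks (c := 3)
    (fun i => insert (Fin.clamp (3 * i + 1) (m + 1))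
      ((pathGraph _).neighborSet (Fin.clamp (3 * i + 1) (m + 1))))
    (fun i _ => Or.inl (isInducedStarSet_insert_neighborSet pathGraph_cliqueFree_three
      (Set.toFinite _) (pathGraph_neighborSet_nonempty hn _)))
    (fun j => j / 3) (fun j => ⟨by omega, ?_⟩) Finset.univ (fun S hS F _ hFS => ?_) (by simp; omega)
  · simp only [Set.mem_insert_iff, mem_neighborSet, pathGraph_adj, Fin.ext_iff, Fin.clamp]
    omega
  · rcases hS with hstar | ⟨v, rfl⟩
    · obtain ⟨c, hc⟩ := hstar.exists_subset_insert_neighborSet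
      exact pathGraph_card_le_three (hFS.trans hc)
    · exact (Finset.card_le_one.2 fun a ha b hb => (hFS ha).trans (hFS hb).symm).trans (by norm_num)

theorem statement_17 (n : ℕ) (hn : 2 ≤ n) :
    inspc (completeGraph (Fin n)) = (n + 1) / 2 ∧
    inspc (SStar n) = (n + 1) / 2 ∧
    inspp (STilde n) = n + 1 ∧
    inpc (starGraphK1 n) = (n + 1) / 2 ∧
    insc (pathGraph n) = (n + 2) / 3 :=
  ⟨inspc_completeGraph hn, inspc_sStar hn, inspp_sTilde n, inpc_starGraphK1 hn, insc_pathGraph hn⟩
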